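/- arXiv:1502.01005 — 2 statements merged into one kernel-verified Lean document; each statement's English description precedes it below -/
import Mathlib

section
/- Let ℜ ⊆ F(𝒜) and let Γ ∈ co(ℜ). Then Q_Γ(ℜ) is a minimal prime ideal of J(ℜ) if and only if Q_{Γ'}(ℜ) ⊄ Q_Γ(ℜ) for every ℜ-cover Γ' with Γ' ⊊ Γ. -/
/-!
The heart of the matter is the Orlik–Terao theorem: for nonzero vectors `gᵢ ∈ Kˢ`, the ideal
generated by the `ι(a)` for all relations `a` of the `gᵢ` is the kernel of `xᵢ ↦ 1/ℓ(gᵢ)`, where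
`ℓ(v) = ∑ₜ vₜ yₜ`. It is proved by induction on the number of vectors. If some `g_j` is a
multiple `c • g₀` of the last vector, the relation `c e₀ - e_j` lets one substitute `c x_j`
for `x₀`. Otherwise, project along `g₀` and induct on the degree `d` in `x₀`: clearing
denominators in `∑ₖ qₖ(1/ℓ(g)) ℓ(g₀)⁻ᵏ = 0` and substituting to kill `ℓ(g₀)` shows that the
leading coefficient `q_d` lies in the kernel for the projected vectors, hence is a combination of
their relation polynomials; these lift to relations of the `gᵢ` and allow `x₀ q_d` to be replaced
by a polynomial of lower degree.

Choosing vectors whose relation space is `K·ℜ₀(Γ)`, the ideal `Q_Γ(ℜ)` is then the kernel of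
`xᵢ ↦ 0` for `i ∈ Γ` and `xᵢ ↦ 1/ℓ(gᵢ)` otherwise: it is prime and contains `xⱼ` exactly when
`j ∈ Γ`. For a prime `q` with `J(ℜ) ≤ q ≤ Q_Γ(ℜ)`, the indices of the variables in `q` form an
`ℜ`-cover `Γ' ⊆ Γ` with `Q_Γ'(ℜ) ≤ q`, and both implications follow.
-/

open MvPolynomial

noncomputable section

variable {K : Type*} [Field K] {n : ℕ}

open Classical in
/-- The support `supp(a) = {i : aᵢ ≠ 0}` of the linear form `∑ᵢ aᵢ xᵢ ∈ S₁`,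
where linear forms of `S = K[x₁,…,xₙ]` are identified with their coefficient
vectors `a : Fin n → K`. -/
def lsupp (a : Fin n → K) : Finset (Fin n) :=
  Finset.univ.filter (fun i => a i ≠ 0)

/-- `ι(r) = ∑_{i ∈ supp r} aᵢ · x_{supp(r) ∖ {i}}` for the linear form `r = ∑ᵢ aᵢ xᵢ`. -/
def iotaL (a : Fin n → K) : MvPolynomial (Fin n) K :=
  ∑ i ∈ lsupp a, C (a i) * ∏ j ∈ (lsupp a).erase i, X j

/-- `x_[n] = x₁⋯xₙ`. -/
def xAll (n : ℕ) (K : Type*) [Field K] : MvPolynomial (Fin n) K := ∏ i, X i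

/-- `a : Fin n → K` (identified with the linear form `∑ᵢ aᵢ xᵢ ∈ S₁`) is a relation of the
central arrangement whose hyperplanes are the kernels of the linear forms `α i`, i.e. it lies
in the kernel of the map `S₁ → V*`, `xᵢ ↦ αᵢ`. -/
def IsRel {V : Type*} [AddCommGroup V] [Module K V]
    (α : Fin n → Module.Dual K V) (a : Fin n → K) : Prop :=
  ∑ i, a i • α i = 0

/-- `J(ℜ) = (ι(r) : r ∈ ℜ)`. -/
def Jid (R : Set (Fin n → K)) : Ideal (MvPolynomial (Fin n) K) :=
  Ideal.span (iotaL '' R)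

/-- `I(ℜ) = (ι(r) : r ∈ K·ℜ)`. -/
def Iid (R : Set (Fin n → K)) : Ideal (MvPolynomial (Fin n) K) :=
  Ideal.span (iotaL '' (Submodule.span K R : Set (Fin n → K)))

/-- The Orlik–Terao ideal `I(𝒜) = (ι(r) : r ∈ F(𝒜))`. -/
def OTid {V : Type*} [AddCommGroup V] [Module K V]
    (α : Fin n → Module.Dual K V) : Ideal (MvPolynomial (Fin n) K) :=
  Ideal.span (iotaL '' {a | IsRel α a})

/-- The codimension (height) of an ideal `I`: the infimum of the heights, in the prime
spectrum, of the prime ideals containing `I`. -/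
def codim {R : Type*} [CommRing R] (I : Ideal R) : ℕ∞ :=
  ⨅ p ∈ {p : PrimeSpectrum R | I ≤ p.asIdeal}, Order.height p

/-- `Γ ∈ co(ℜ)`: `Γ` is an `ℜ`-cover, i.e. `|Γ ∩ supp(r)| ≠ 1` for every `r ∈ ℜ`. -/
def IsCover (R : Set (Fin n → K)) (Γ : Finset (Fin n)) : Prop :=
  ∀ r ∈ R, (Γ ∩ lsupp r).card ≠ 1

/-- `ℜ₀(Γ) = {r ∈ ℜ : Γ ∩ supp(r) = ∅}`. -/
def R0 (R : Set (Fin n → K)) (Γ : Finset (Fin n)) : Set (Fin n → K) :=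
  {r ∈ R | Γ ∩ lsupp r = ∅}

/-- `Q_Γ(ℜ) = (xᵢ : i ∈ Γ) + I(ℜ₀(Γ))`. -/
def Qid (R : Set (Fin n → K)) (Γ : Finset (Fin n)) : Ideal (MvPolynomial (Fin n) K) :=
  Ideal.span ((fun i => (X i : MvPolynomial (Fin n) K)) '' ↑Γ) ⊔ Iid (R0 R Γ)

lemma MvPolynomial.sub_aeval_mem {R ι : Type*} [CommRing R] {I : Ideal (MvPolynomial ι R)}
    {v : ι → MvPolynomial ι R} (hv : ∀ i, X i - v i ∈ I) (f : MvPolynomial ι R) :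
    f - aeval v f ∈ I := by
  rw [← Ideal.Quotient.eq]
  have : (Ideal.Quotient.mkₐ R I).comp (aeval v) = Ideal.Quotient.mkₐ R I := by
    ext i
    simpa [Ideal.Quotient.eq] using I.neg_mem_iff.2 (hv i)
  exact (DFunLike.congr_fun this f).symm

lemma Ideal.comap_eq_map_sup_ker {A B F G : Type*} [CommRing A] [CommRing B] [FunLike F A B]
    [RingHomClass F A B] [FunLike G B A] [RingHomClass G B A] {π : F} {s : G}
    (h : ∀ b, π (s b) = b) (J : Ideal B) : J.comap π = J.map s ⊔ RingHom.ker π := by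
  refine le_antisymm (fun a ha => ?_) (sup_le (Ideal.map_le_iff_le_comap.2 fun b hb => ?_)
    fun a ha => ?_)
  · rw [← add_sub_cancel (s (π a)) a]
    exact Submodule.add_mem_sup (Ideal.mem_map_of_mem s ha) (by simp [RingHom.mem_ker, h])
  · simpa [h] using hb
  · simp [RingHom.mem_ker.1 ha]

lemma MvPolynomial.ker_killCompl {R σ τ : Type*} [CommRing R] {f : σ → τ}
    (hf : Function.Injective f) :
    RingHom.ker (killCompl (R := R) hf) = Ideal.span (X '' (Set.range f)ᶜ) := by
  refine le_antisymm (fun p hp => ?_) (Ideal.span_le.2 ?_)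
  · have hcomp : (rename f).comp (killCompl (R := R) hf) =
        aeval fun i => rename f (killCompl hf (X i)) :=
      algHom_ext fun i => by rw [AlgHom.comp_apply, aeval_X]
    have := sub_aeval_mem (I := Ideal.span (X '' (Set.range f)ᶜ))
      (v := fun i => rename f (killCompl hf (X i))) (fun i => ?_) p
    · rwa [← hcomp, AlgHom.comp_apply, RingHom.mem_ker.1 hp, map_zero, sub_zero] at this
    by_cases hi : i ∈ Set.range f
    · obtain ⟨j, rfl⟩ := hi
      rw [← rename_X f j, killCompl_rename_app, sub_self]
      exact Ideal.zero_mem _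
    · rw [killCompl, aeval_X, dif_neg hi, map_zero, sub_zero]
      exact Ideal.subset_span ⟨i, hi, rfl⟩
  · rintro _ ⟨i, hi, rfl⟩
    rw [SetLike.mem_coe, RingHom.mem_ker, killCompl, aeval_X, dif_neg hi]

lemma MvPolynomial.optionEquivLeft_symm_C {R κ : Type*} [CommSemiring R] (q : MvPolynomial κ R) :
    (optionEquivLeft R κ).symm (Polynomial.C q) = rename some q := by
  simp [optionEquivLeft_symm_apply]

lemma Submodule.exists_linearMap_ker_eq {K V : Type*} [DivisionRing K] [AddCommGroup V] [Module K V]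
    (U : Submodule K V) :
    ∃ P : V →ₗ[K] V, LinearMap.ker P = U := by
  obtain ⟨W, hW⟩ := U.exists_isCompl
  exact ⟨W.subtype ∘ₗ Submodule.projectionOnto W U hW.symm, by
    rw [LinearMap.ker_comp_of_ker_eq_bot _ W.ker_subtype, Submodule.ker_projectionOnto]⟩

namespace OrlikTerao

section Iota

variable {ι : Type*}

open Classical in
def supp [Fintype ι] (a : ι → K) : Finset ι :=
  Finset.univ.filter (fun i => a i ≠ 0)

@[simp] lemma mem_supp [Fintype ι] {a : ι → K} {i : ι} : i ∈ supp a ↔ a i ≠ 0 := by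
  simp [supp]

lemma supp_subset_iff [Fintype ι] {a : ι → K} {D : Finset ι} :
    supp a ⊆ D ↔ ∀ i ∉ D, a i = 0 := by
  simp only [Finset.subset_iff, mem_supp]
  exact forall_congr' fun i => not_imp_comm.trans (by simp)

variable [DecidableEq ι]

def iotaOn (D : Finset ι) : (ι → K) →ₗ[K] MvPolynomial ι K where
  toFun a := ∑ i ∈ D, C (a i) * ∏ j ∈ D.erase i, X j
  map_add' a b := by simp only [Pi.add_apply, map_add, add_mul, Finset.sum_add_distrib]
  map_smul' c a := by
    simp only [Pi.smul_apply, smul_eq_mul, map_mul, RingHom.id_apply, Finset.smul_sum,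
      smul_eq_C_mul, mul_assoc]

lemma iotaOn_apply (D : Finset ι) (a : ι → K) :
    iotaOn D a = ∑ i ∈ D, C (a i) * ∏ j ∈ D.erase i, X j := rfl

lemma iotaOn_insert {D : Finset ι} {i : ι} (hi : i ∉ D) (a : ι → K) :
    iotaOn (insert i D) a = C (a i) * ∏ j ∈ D, X j + X i * iotaOn D a := by
  rw [iotaOn_apply, iotaOn_apply, Finset.sum_insert hi, Finset.erase_insert hi, Finset.mul_sum]
  congr 1
  refine Finset.sum_congr rfl fun k hk => ?_
  rw [Finset.erase_insert_of_ne (ne_of_mem_of_not_mem hk hi).symm, Finset.prod_insert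
    fun h => hi (Finset.mem_of_mem_erase h)]
  ring

lemma iotaOn_pair {i j : ι} (hij : i ≠ j) (a : ι → K) :
    iotaOn {i, j} a = C (a i) * X j + C (a j) * X i := by
  rw [iotaOn_insert (by simpa using hij), iotaOn_apply]
  simp only [Finset.prod_singleton, Finset.sum_singleton, Finset.erase_singleton,
    Finset.prod_empty]
  ring

lemma rename_iotaOn {ι' : Type*} [DecidableEq ι'] (e : ι' ↪ ι) (D : Finset ι') (a : ι → K) :
    rename e (iotaOn D (a ∘ e)) = iotaOn (D.map e) a := by
  simp only [iotaOn_apply, map_sum, map_mul, rename_C, map_prod, rename_X, Finset.sum_map,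
    ← Finset.map_erase, Finset.prod_map, Function.comp_apply]

variable [Fintype ι]

def iota (a : ι → K) : MvPolynomial ι K := iotaOn (supp a) a

def iotaIdeal (W : Submodule K (ι → K)) : Ideal (MvPolynomial ι K) := Ideal.span (iota '' W)

lemma iota_mem_iotaIdeal {W : Submodule K (ι → K)} {a : ι → K} (ha : a ∈ W) :
    iota a ∈ iotaIdeal W :=
  Ideal.subset_span ⟨a, ha, rfl⟩

lemma iotaOn_eq_prod_mul_iota {D : Finset ι} {a : ι → K} (h : supp a ⊆ D) :
    iotaOn D a = (∏ j ∈ D \ supp a, X j) * iota a := by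
  rw [iota, iotaOn_apply, iotaOn_apply, Finset.mul_sum,
    ← Finset.sum_subset h fun i _ hi => by simp [not_not.1 (mem_supp.not.1 hi)]]
  refine Finset.sum_congr rfl fun i hi => ?_
  have hdisj : Disjoint (D \ supp a) ((supp a).erase i) := Finset.disjoint_left.2
    fun j h1 h2 => (Finset.mem_sdiff.1 h1).2 (Finset.mem_of_mem_erase h2)
  rw [mul_left_comm, ← Finset.prod_union hdisj]
  congr 2
  ext j
  by_cases hj : j ∈ supp a <;> by_cases hji : j = i <;> simp_all [@h j]

lemma iotaOn_mem_iotaIdeal {W : Submodule K (ι → K)} {D : Finset ι} {a : ι → K} (ha : a ∈ W)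
    (h : supp a ⊆ D) : iotaOn D a ∈ iotaIdeal W := by
  rw [iotaOn_eq_prod_mul_iota h]
  exact Ideal.mul_mem_left _ _ (iota_mem_iotaIdeal ha)

end Iota

section Prime

variable {ι : Type*} [Fintype ι] [DecidableEq ι]

lemma iota_mem_span_X {Γ : Finset ι} {a : ι → K} (h : 1 < (Γ ∩ supp a).card) :
    iota a ∈ Ideal.span (X '' (Γ : Set ι)) := by
  refine Ideal.sum_mem _ fun i _ => Ideal.mul_mem_left _ _ ?_
  obtain ⟨j, hj, hji⟩ := Finset.exists_mem_ne h i
  rw [Finset.mem_inter] at hj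
  exact Ideal.mem_of_dvd _ (Finset.dvd_prod_of_mem _ (Finset.mem_erase.2 ⟨hji, hj.2⟩))
    (Ideal.subset_span ⟨j, hj.1, rfl⟩)

variable {p : Ideal (MvPolynomial ι K)} [hp : p.IsPrime]
include hp

/-- Modulo `xᵢ`, `ι(a)` is `aᵢ x_{supp(a) ∖ {i}}`. -/
lemma exists_X_mem_of_iota_mem {a : ι → K} {i : ι} (hi : i ∈ supp a) (hXi : X i ∈ p)
    (ha : iota a ∈ p) : ∃ j ∈ (supp a).erase i, X j ∈ p := by
  have hrest : ∑ k ∈ (supp a).erase i, C (a k) * ∏ j ∈ (supp a).erase k, X j ∈ p :=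
    Ideal.sum_mem _ fun k hk => Ideal.mul_mem_left _ _ <| p.mem_of_dvd
      (Finset.dvd_prod_of_mem _ (Finset.mem_erase.2 ⟨(Finset.ne_of_mem_erase hk).symm, hi⟩)) hXi
  have hlead : C (a i) * ∏ j ∈ (supp a).erase i, X j ∈ p := by
    have := p.sub_mem ha hrest
    rwa [iota, iotaOn_apply, ← Finset.add_sum_erase _ _ hi, add_sub_cancel_right] at this
  rcases hp.mem_or_mem hlead with h | h
  · exact absurd (p.eq_top_of_isUnit_mem h ((mem_supp.1 hi).isUnit.map C)) hp.ne_top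
  · exact Ideal.IsPrime.prod_mem_iff.1 h

lemma iota_mem_of_mem_span {D : Finset ι} (hD : ∀ j ∈ D, X j ∉ p) {T : Set (ι → K)}
    (hT : ∀ b ∈ T, supp b ⊆ D ∧ iota b ∈ p) {a : ι → K} (ha : a ∈ Submodule.span K T) :
    iota a ∈ p := by
  have key : supp a ⊆ D ∧ iotaOn D a ∈ p := by
    induction ha using Submodule.span_induction with
    | mem b hb =>
      rw [iotaOn_eq_prod_mul_iota (hT b hb).1]
      exact ⟨(hT b hb).1, p.mul_mem_left _ (hT b hb).2⟩
    | zero => simp [supp_subset_iff]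
    | add b c _ _ hb hc =>
      simp_all only [supp_subset_iff, map_add]
      exact ⟨fun i hi => by simp [hb.1 i hi, hc.1 i hi], p.add_mem hb.2 hc.2⟩
    | smul c b _ hb =>
      simp_all only [supp_subset_iff, map_smul]
      exact ⟨fun i hi => by simp [hb.1 i hi], p.smul_of_tower_mem c hb.2⟩
  rw [iotaOn_eq_prod_mul_iota key.1] at key
  refine (hp.mem_or_mem key.2).resolve_left fun h => ?_
  obtain ⟨j, hj, hXj⟩ := Ideal.IsPrime.prod_mem_iff.1 h
  exact hD j (Finset.mem_sdiff.1 hj).1 hXj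

end Prime

section Relations

variable {ι ι' M : Type*} [Fintype ι] [Fintype ι'] [AddCommGroup M] [Module K M]

variable (K) in
def relations (g : ι → M) : Submodule K (ι → K) :=
  LinearMap.ker (Fintype.linearCombination K g)

lemma mem_relations {g : ι → M} {a : ι → K} : a ∈ relations K g ↔ ∑ i, a i • g i = 0 := by
  rw [relations, LinearMap.mem_ker, Fintype.linearCombination_apply]

lemma extend_mem_relations (e : ι' ↪ ι) {g : ι → M} {w : ι' → K}
    (hw : w ∈ relations K (g ∘ e)) : Function.extend e w 0 ∈ relations K g := by
  rw [mem_relations] at hw ⊢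
  rw [← hw]
  refine (Fintype.sum_of_injective e e.injective _ _ (fun i hi => ?_) fun j => ?_).symm
  · rw [Function.extend_apply' _ _ _ hi, Pi.zero_apply, zero_smul]
  · rw [Function.comp_apply, e.injective.extend_apply]

lemma comp_mem_relations (e : ι' ↪ ι) {g : ι → M} {a : ι → K} (ha : a ∈ relations K g)
    (h : ∀ i ∉ Set.range e, a i = 0) : a ∘ e ∈ relations K (g ∘ e) := by
  rw [mem_relations] at ha ⊢
  rw [← ha]
  exact Fintype.sum_of_injective e e.injective _ _ (fun i hi => by rw [h i hi, zero_smul])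
    fun j => rfl

variable [DecidableEq ι] [DecidableEq ι']

lemma rename_iota_comp (e : ι' ↪ ι) {a : ι → K} (h : ∀ i ∉ Set.range e, a i = 0) :
    rename e (iota (a ∘ e)) = iota a := by
  have hsupp : (supp (a ∘ e)).map e = supp a := by
    ext i
    by_cases hi : i ∈ Set.range e
    · obtain ⟨j, rfl⟩ := hi
      simp
    · simp only [Finset.mem_map, mem_supp, Function.comp_apply, h i hi, ne_eq, not_true_eq_false,
        iff_false, not_exists, not_and]
      exact fun j _ hj => hi ⟨j, hj⟩
  rw [iota, rename_iotaOn, hsupp, iota]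

lemma rename_mem_iotaIdeal (e : ι' ↪ ι) {g : ι → M} {q : MvPolynomial ι' K}
    (hq : q ∈ iotaIdeal (relations K (g ∘ e))) : rename e q ∈ iotaIdeal (relations K g) := by
  refine (Ideal.map_le_iff_le_comap.2 ?_ : Ideal.map (rename e) _ ≤ _) (Ideal.mem_map_of_mem _ hq)
  refine Ideal.span_le.2 ?_
  rintro _ ⟨w, hw, rfl⟩
  have hvan : ∀ i ∉ Set.range e, Function.extend e w 0 i = 0 := fun i hi =>
    Function.extend_apply' _ _ _ hi
  have hw' : Function.extend e w 0 ∘ e = w := funext fun j => e.injective.extend_apply _ _ _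
  rw [SetLike.mem_coe, Ideal.mem_comap, ← hw', rename_iota_comp e hvan]
  exact iota_mem_iotaIdeal (extend_mem_relations e hw)

lemma map_rename_iotaIdeal (e : ι' ↪ ι) {g : ι → M}
    (hg : ∀ a ∈ relations K g, ∀ i ∉ Set.range e, a i = 0) :
    Ideal.map (rename e) (iotaIdeal (relations K (g ∘ e))) = iotaIdeal (relations K g) := by
  refine le_antisymm (Ideal.map_le_iff_le_comap.2 fun q hq => rename_mem_iotaIdeal e hq) ?_
  refine Ideal.span_le.2 ?_
  rintro _ ⟨a, ha, rfl⟩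
  rw [← rename_iota_comp e (hg a ha)]
  exact Ideal.mem_map_of_mem _ (iota_mem_iotaIdeal (comp_mem_relations e ha (hg a ha)))

lemma X_sub_C_mul_X_mem_iotaIdeal {g : ι → M} {i j : ι} (hij : i ≠ j) {c : K}
    (h : c • g i = g j) : X i - C c * X j ∈ iotaIdeal (relations K g) := by
  set a : ι → K := Pi.single i c - Pi.single j 1
  have ha : a ∈ relations K g := by
    rw [relations, LinearMap.mem_ker, map_sub, Fintype.linearCombination_apply_single,
      Fintype.linearCombination_apply_single, one_smul, h, sub_self]
  have hsupp : supp a ⊆ {i, j} := supp_subset_iff.2 fun k hk => by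
    simp only [Finset.mem_insert, Finset.mem_singleton, not_or] at hk
    simp [a, hk.1, hk.2]
  have := neg_mem (iotaOn_mem_iotaIdeal ha hsupp)
  rw [iotaOn_pair hij] at this
  convert this using 1
  simp [a, hij.symm]
  ring

end Relations

variable (K) in
abbrev MvRatFunc (σ : Type*) := FractionRing (MvPolynomial σ K)

section Reciprocals

variable {σ : Type*} [Fintype σ]

def linForm : (σ → K) →ₗ[K] MvPolynomial σ K := Fintype.linearCombination K X

lemma linForm_apply (v : σ → K) : linForm v = ∑ t, v t • X t :=
  Fintype.linearCombination_apply _ _ _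

lemma linForm_injective : Function.Injective (linForm : (σ → K) → MvPolynomial σ K) :=
  (injective_iff_map_eq_zero _).2 fun v hv => funext <|
    Fintype.linearIndependent_iff.1 (linearIndependent_X σ K) v (by rwa [← linForm_apply])

lemma algebraMap_linForm_ne_zero {v : σ → K} (hv : v ≠ 0) :
    algebraMap _ (MvRatFunc K σ) (linForm v) ≠ 0 :=
  (map_ne_zero_iff _ (IsFractionRing.injective _ _)).2 <|
    (linForm_injective.ne_iff' (map_zero _)).2 hv

lemma aeval_linForm {τ : Type*} [Fintype τ] [DecidableEq σ] (P : (σ → K) →ₗ[K] (τ → K))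
    (v : σ → K) : aeval (fun t => linForm (P (Pi.single t 1))) (linForm v) = linForm (P v) := by
  have hv : v = ∑ t, v t • Pi.single t 1 := by ext; simp [Finset.sum_apply, Pi.single_apply]
  conv_rhs => rw [hv]
  simp only [linForm_apply, map_sum, map_smul, aeval_X]

def recip (v : σ → K) : MvRatFunc K σ := (algebraMap _ _ (linForm v))⁻¹

lemma recip_ne_zero {v : σ → K} (hv : v ≠ 0) : recip v ≠ 0 :=
  inv_ne_zero (algebraMap_linForm_ne_zero hv)

lemma recip_smul (c : K) (v : σ → K) : recip (c • v) = (algebraMap K _ c)⁻¹ * recip v := by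
  rw [recip, recip, map_smul, Algebra.smul_def, map_mul, ← IsScalarTower.algebraMap_apply, mul_inv]

def recipHom {ι : Type*} (g : ι → σ → K) : MvPolynomial ι K →ₐ[K] MvRatFunc K σ :=
  aeval fun i => recip (g i)

lemma recipHom_rename {ι ι' : Type*} (e : ι' → ι) (g : ι → σ → K) (q : MvPolynomial ι' K) :
    recipHom g (rename e q) = recipHom (g ∘ e) q :=
  aeval_rename _ _ _

end Reciprocals

section Kernel

variable {σ : Type*} [Fintype σ] {ι : Type*} [Fintype ι] [DecidableEq ι] {g : ι → σ → K}

lemma recipHom_iota_eq_zero (hg : ∀ i, g i ≠ 0) {a : ι → K} (ha : a ∈ relations K g) :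
    recipHom g (iota a) = 0 := by
  set y : ι → MvRatFunc K σ := fun i => algebraMap _ _ (linForm (g i))
  have hy : ∀ i, y i ≠ 0 := fun i => algebraMap_linForm_ne_zero (hg i)
  have hsum : ∑ i ∈ supp a, a i • y i = 0 := by
    rw [Finset.sum_subset (Finset.subset_univ _) fun i _ hi => by
      simp [not_not.1 (mem_supp.not.1 hi)]]
    have := congrArg (fun v => IsScalarTower.toAlgHom K _ (MvRatFunc K σ) (linForm v))
      (mem_relations.1 ha)
    simpa [map_sum, map_smul] using this
  calc recipHom g (iota a) = ∑ i ∈ supp a, a i • ∏ j ∈ (supp a).erase i, (y j)⁻¹ := by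
        simp [recipHom, iota, iotaOn_apply, recip, y, Algebra.smul_def]
    _ = (∏ j ∈ supp a, (y j)⁻¹) * ∑ i ∈ supp a, a i • y i := by
        rw [Finset.mul_sum]
        refine Finset.sum_congr rfl fun i hi => ?_
        rw [← Finset.mul_prod_erase _ _ hi, mul_smul_comm, mul_right_comm,
          inv_mul_cancel₀ (hy i), one_mul]
    _ = 0 := by rw [hsum, mul_zero]

lemma iotaIdeal_le_ker_recipHom (hg : ∀ i, g i ≠ 0) :
    iotaIdeal (relations K g) ≤ RingHom.ker (recipHom g) :=
  Ideal.span_le.2 <| by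
    rintro _ ⟨a, ha, rfl⟩
    exact recipHom_iota_eq_zero hg ha

end Kernel

section Parallel

variable {σ κ : Type*} [Fintype σ] [Fintype κ] [DecidableEq κ] {g : Option κ → σ → K}

/-- Substituting `c x_{j₀}` for `x_none` is the identity modulo the relation ideal and does not
change `recipHom g`. -/
lemma ker_recipHom_le_of_parallel
    (IH : RingHom.ker (recipHom (g ∘ some)) ≤ iotaIdeal (relations K (g ∘ some)))
    {j₀ : κ} {c : K} (hc : c ≠ 0) (hj₀ : c • g none = g (some j₀)) :
    RingHom.ker (recipHom g) ≤ iotaIdeal (relations K g) := by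
  have hpair := X_sub_C_mul_X_mem_iotaIdeal (g := g) (Option.some_ne_none j₀).symm hj₀
  set τ : MvPolynomial (Option κ) K →ₐ[K] MvPolynomial κ K :=
    aeval fun o => o.elim (C c * X j₀) X
  have hτ : (rename some).comp τ = aeval fun o => rename some (o.elim (C c * X j₀) X) :=
    comp_aeval _ _
  have hrecip : (recipHom g).comp ((rename some).comp τ) = recipHom g := by
    rw [hτ, comp_aeval]
    ext (_ | j) <;> simp [recipHom, ← hj₀, recip_smul, hc]
  intro f hf
  have hτf : τ f ∈ RingHom.ker (recipHom (g ∘ some)) := by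
    have := DFunLike.congr_fun hrecip f
    rw [AlgHom.comp_apply, AlgHom.comp_apply] at this
    rw [RingHom.mem_ker, ← recipHom_rename, this]
    exact hf
  have hsub : f - rename some (τ f) ∈ iotaIdeal (relations K g) := by
    rw [← AlgHom.comp_apply, hτ]
    refine sub_aeval_mem (fun o => ?_) f
    cases o <;> simp [hpair]
  simpa using add_mem hsub (rename_mem_iotaIdeal Function.Embedding.some (IH hτf))

end Parallel

section Clearing

variable {σ κ : Type*} [Fintype σ] [Fintype κ]

/-- `(∏ⱼ xⱼ)^M · q(x⁻¹)`, a polynomial as soon as `M` bounds the degrees of `q`. -/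
def reflect (M : ℕ) (q : MvPolynomial κ K) : MvPolynomial κ K :=
  ∑ μ ∈ q.support, C (q.coeff μ) * ∏ j, X j ^ (M - μ j)

lemma aeval_reflect {L : Type*} [Field L] [Algebra K L] {y : κ → L} (hy : ∀ j, y j ≠ 0)
    {M : ℕ} {q : MvPolynomial κ K} (hq : ∀ j, degreeOf j q ≤ M) :
    aeval y (reflect M q) = (∏ j, y j) ^ M * aeval (fun j => (y j)⁻¹) q := by
  conv_rhs => rw [q.as_sum]
  simp only [reflect, map_sum, Finset.mul_sum, map_mul, aeval_C, map_prod, map_pow, aeval_X,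
    aeval_monomial, Finsupp.prod_pow]
  refine Finset.sum_congr rfl fun μ hμ => ?_
  rw [mul_left_comm, ← Finset.prod_pow, ← Finset.prod_mul_distrib]
  congr 1
  refine Finset.prod_congr rfl fun j _ => ?_
  rw [pow_sub₀ _ (hy j) ((monomial_le_degreeOf j hμ).trans (hq j)), inv_pow]

lemma algebraMap_aeval_reflect {h : κ → σ → K} (hh : ∀ j, h j ≠ 0) {M : ℕ}
    {q : MvPolynomial κ K} (hq : ∀ j, degreeOf j q ≤ M) :
    algebraMap _ (MvRatFunc K σ) (aeval (fun j => linForm (h j)) (reflect M q)) =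
      (∏ j, algebraMap _ (MvRatFunc K σ) (linForm (h j))) ^ M * recipHom h q := by
  rw [← IsScalarTower.toAlgHom_apply K, comp_aeval_apply]
  simp only [IsScalarTower.toAlgHom_apply]
  rw [aeval_reflect (fun j => algebraMap_linForm_ne_zero (hh j)) hq]
  rfl

def clearDenom (h : κ → σ → K) (w : σ → K) (M : ℕ) (p : Polynomial (MvPolynomial κ K)) :
    MvPolynomial σ K :=
  ∑ k ∈ Finset.range (p.natDegree + 1),
    aeval (fun j => linForm (h j)) (reflect M (p.coeff k)) * linForm w ^ (p.natDegree - k)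

lemma algebraMap_clearDenom {h : κ → σ → K} (hh : ∀ j, h j ≠ 0) {w : σ → K} (hw : w ≠ 0)
    {M : ℕ} {p : Polynomial (MvPolynomial κ K)}
    (hM : ∀ k ≤ p.natDegree, ∀ j, degreeOf j (p.coeff k) ≤ M) :
    algebraMap _ (MvRatFunc K σ) (clearDenom h w M p) =
      (∏ j, algebraMap _ (MvRatFunc K σ) (linForm (h j))) ^ M *
        algebraMap _ _ (linForm w) ^ p.natDegree *
        Polynomial.aevalTower (recipHom h) (recip w) p := by
  rw [show Polynomial.aevalTower (recipHom h) (recip w) p =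
    p.eval₂ (recipHom h : MvPolynomial κ K →+* MvRatFunc K σ) (recip w) from rfl,
    Polynomial.eval₂_eq_sum_range, clearDenom, map_sum, Finset.mul_sum]
  refine Finset.sum_congr rfl fun k hk => ?_
  rw [Finset.mem_range_succ_iff] at hk
  rw [map_mul, map_pow, algebraMap_aeval_reflect hh (hM k hk), recip, inv_pow,
    pow_sub₀ _ (algebraMap_linForm_ne_zero hw) hk]
  simp only [RingHom.coe_coe]
  ring

lemma aeval_clearDenom {τ : Type*} [Fintype τ] [DecidableEq σ] (h : κ → σ → K) {w : σ → K}
    (M : ℕ) (p : Polynomial (MvPolynomial κ K)) (P : (σ → K) →ₗ[K] (τ → K)) (hPw : P w = 0) :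
    aeval (fun t => linForm (P (Pi.single t 1))) (clearDenom h w M p) =
      aeval (fun j => linForm (P (h j))) (reflect M p.leadingCoeff) := by
  rw [clearDenom, map_sum, Finset.sum_eq_single p.natDegree]
  · simp only [aeval_linForm, Nat.sub_self, pow_zero, mul_one, comp_aeval_apply,
      Polynomial.leadingCoeff]
  · intro k hk hkd
    rw [map_mul, map_pow, aeval_linForm, hPw, map_zero,
      zero_pow (by have := Finset.mem_range_succ_iff.1 hk; omega), mul_zero]
  · simp

/-- Clearing denominators turns `p(1/ℓ(w)) = 0` into a polynomial identity in which every term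
but the leading one is divisible by `ℓ(w)`; the substitution induced by `P` kills `ℓ(w)`. -/
lemma recipHom_leadingCoeff_eq_zero {τ : Type*} [Fintype τ] [DecidableEq σ]
    {h : κ → σ → K} (hh : ∀ j, h j ≠ 0) {w : σ → K} (hw : w ≠ 0)
    (P : (σ → K) →ₗ[K] (τ → K)) (hPw : P w = 0) (hPh : ∀ j, P (h j) ≠ 0)
    {p : Polynomial (MvPolynomial κ K)}
    (hp : Polynomial.aevalTower (recipHom h) (recip w) p = 0) :
    recipHom (P ∘ h) p.leadingCoeff = 0 := by
  set M := (Finset.range (p.natDegree + 1)).sup fun k => (p.coeff k).totalDegree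
  have hM : ∀ k ≤ p.natDegree, ∀ j, degreeOf j (p.coeff k) ≤ M := fun k hk j =>
    (degreeOf_le_totalDegree _ j).trans
      (Finset.le_sup (f := fun k => (p.coeff k).totalDegree) (Finset.mem_range_succ_iff.2 hk))
  have hclear : clearDenom h w M p = 0 := IsFractionRing.injective _ (MvRatFunc K σ) <| by
    rw [algebraMap_clearDenom hh hw hM, hp, mul_zero, map_zero]
  have key := algebraMap_aeval_reflect (h := P ∘ h) (q := p.leadingCoeff) hPh (hM _ le_rfl)
  simp only [Function.comp_apply] at key
  rw [← aeval_clearDenom h M p P hPw, hclear, map_zero, map_zero] at key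
  exact (mul_eq_zero.1 key.symm).resolve_left <| pow_ne_zero _ <|
    Finset.prod_ne_zero_iff.2 fun j _ => algebraMap_linForm_ne_zero (hPh j)

end Clearing

section NotParallel

variable {κ : Type*}

/-- A relation `w` of the projected vectors `P ∘ g ∘ some` lifts to the relation `(-c, w)` of `g`,
where `∑ wⱼ gⱼ = c • g none`. -/
lemma exists_X_none_mul_rename_sub_mem [Fintype κ] [DecidableEq κ] {M N : Type*}
    [AddCommGroup M] [Module K M] [AddCommGroup N] [Module K N] {g : Option κ → M}
    (P : M →ₗ[K] N) (hP : LinearMap.ker P ≤ K ∙ g none) {q : MvPolynomial κ K}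
    (hq : q ∈ iotaIdeal (relations K (P ∘ g ∘ some))) :
    ∃ e, X none * rename some q - rename some e ∈ iotaIdeal (relations K g) := by
  induction hq using Submodule.span_induction with
  | mem _ hq =>
    obtain ⟨w, hw, rfl⟩ := hq
    obtain ⟨c, hc⟩ : ∃ c : K, c • g none = ∑ j, w j • g (some j) := by
      refine Submodule.mem_span_singleton.1 (hP ?_)
      rw [LinearMap.mem_ker, map_sum]
      simpa using mem_relations.1 hw
    set a : Option κ → K := fun o => o.elim (-c) w
    have ha : a ∈ relations K g := by
      rw [mem_relations, Fintype.sum_option]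
      simp [a, ← hc]
    have hsupp : supp a ⊆ insert none ((supp w).map Function.Embedding.some) :=
      supp_subset_iff.2 fun o ho => by cases o <;> simp_all [a]
    refine ⟨C c * ∏ j ∈ supp w, X j, ?_⟩
    have := iotaOn_mem_iotaIdeal ha hsupp
    rw [iotaOn_insert (by simp), ← rename_iotaOn, show a ∘ Function.Embedding.some = w from rfl]
      at this
    convert this using 1
    simp [a, iota, map_prod]
    ring
  | zero => exact ⟨0, by simp⟩
  | add x y _ _ hx hy =>
    obtain ⟨e₁, h₁⟩ := hx
    obtain ⟨e₂, h₂⟩ := hy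
    refine ⟨e₁ + e₂, ?_⟩
    convert add_mem h₁ h₂ using 1
    simp only [map_add]
    ring
  | smul r x _ hx =>
    obtain ⟨e, he⟩ := hx
    refine ⟨r * e, ?_⟩
    convert Ideal.mul_mem_left _ (rename some r) he using 1
    simp only [smul_eq_mul, map_mul]
    ring

variable {σ : Type*} [Fintype σ] {g : Option κ → σ → K}

lemma recipHom_eq_aevalTower (f : MvPolynomial (Option κ) K) :
    recipHom g f =
      Polynomial.aevalTower (recipHom (g ∘ some)) (recip (g none)) (optionEquivLeft K κ f) := by
  have : (Polynomial.aevalTower (recipHom (g ∘ some)) (recip (g none))).comp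
      (optionEquivLeft K κ).toAlgHom = recipHom g := by
    ext (_ | j) <;> simp [recipHom]
  exact (DFunLike.congr_fun this f).symm

variable [Fintype κ] [DecidableEq κ]

/-- The leading coefficient `q` of `p` is a relation polynomial of the projected vectors; lifting
`q` to `x_none q - e ∈ I(g)` and subtracting `(x_none q - e) x_none^d` lowers the degree. -/
lemma exists_natDegree_le_sub_mem [DecidableEq σ] (hg : ∀ o, g o ≠ 0)
    (P : (σ → K) →ₗ[K] (σ → K)) (hP : LinearMap.ker P = K ∙ g none)
    (hPg : ∀ j, P (g (some j)) ≠ 0)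
    (IH : RingHom.ker (recipHom (P ∘ g ∘ some)) ≤ iotaIdeal (relations K (P ∘ g ∘ some)))
    {d : ℕ} {p : Polynomial (MvPolynomial κ K)}
    (hp : p.natDegree = d + 1) (hker : (optionEquivLeft K κ).symm p ∈ RingHom.ker (recipHom g)) :
    ∃ p' : Polynomial (MvPolynomial κ K), p'.natDegree ≤ d ∧
      (optionEquivLeft K κ).symm p - (optionEquivLeft K κ).symm p' ∈
        iotaIdeal (relations K g) := by
  have hPw : P (g none) = 0 := LinearMap.mem_ker.1 (hP ▸ Submodule.mem_span_singleton_self _)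
  have hq : p.leadingCoeff ∈ iotaIdeal (relations K (P ∘ g ∘ some)) := by
    refine IH (recipHom_leadingCoeff_eq_zero (fun j => hg _) (hg none) P hPw hPg ?_)
    rwa [RingHom.mem_ker, recipHom_eq_aevalTower, AlgEquiv.apply_symm_apply] at hker
  obtain ⟨c, hc⟩ := exists_X_none_mul_rename_sub_mem P hP.le hq
  refine ⟨p.eraseLead + Polynomial.C c * Polynomial.X ^ d, (Polynomial.natDegree_add_le _ _).trans
    (max_le ((Polynomial.eraseLead_natDegree_le p).trans (by omega))
      (Polynomial.natDegree_C_mul_X_pow_le _ _)), ?_⟩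
  have : p - (p.eraseLead + Polynomial.C c * Polynomial.X ^ d) =
      (Polynomial.X * Polynomial.C p.leadingCoeff - Polynomial.C c) * Polynomial.X ^ d := by
    have hsplit := p.eraseLead_add_C_mul_X_pow
    rw [hp] at hsplit
    linear_combination -hsplit
  rw [← map_sub, this, map_mul, map_sub, map_mul, map_pow, optionEquivLeft_symm_X,
    optionEquivLeft_symm_C, optionEquivLeft_symm_C]
  exact Ideal.mul_mem_right _ _ hc

lemma ker_recipHom_le_of_not_parallel [DecidableEq σ]
    (IH : ∀ g' : κ → σ → K, (∀ j, g' j ≠ 0) →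
      RingHom.ker (recipHom g') ≤ iotaIdeal (relations K g'))
    (hg : ∀ o, g o ≠ 0) (P : (σ → K) →ₗ[K] (σ → K)) (hP : LinearMap.ker P = K ∙ g none)
    (hPg : ∀ j, P (g (some j)) ≠ 0) :
    RingHom.ker (recipHom g) ≤ iotaIdeal (relations K g) := by
  set e := (optionEquivLeft K κ).symm
  suffices key : ∀ d (p : Polynomial (MvPolynomial κ K)), p.natDegree ≤ d →
      e p ∈ RingHom.ker (recipHom g) → e p ∈ iotaIdeal (relations K g) by
    intro f hf
    simpa [e] using key _ (optionEquivLeft K κ f) le_rfl (by simpa [e] using hf)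
  intro d
  induction d with
  | zero =>
    intro p hp hker
    rw [Polynomial.eq_C_of_natDegree_le_zero hp, optionEquivLeft_symm_C] at hker ⊢
    rw [RingHom.mem_ker, recipHom_rename] at hker
    exact rename_mem_iotaIdeal Function.Embedding.some (IH _ (fun j => hg _) hker)
  | succ d ih =>
    intro p hp hker
    rcases hp.lt_or_eq with hp | hp
    · exact ih p (Nat.lt_succ_iff.1 hp) hker
    obtain ⟨p', hp', hdiff⟩ := exists_natDegree_le_sub_mem hg P hP hPg (IH _ hPg) hp hker
    have hker' : e p' ∈ RingHom.ker (recipHom g) := by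
      have := iotaIdeal_le_ker_recipHom hg hdiff
      rwa [RingHom.mem_ker, map_sub, RingHom.mem_ker.1 hker, zero_sub, neg_eq_zero] at this
    simpa [e] using add_mem (ih p' hp' hker') hdiff

end NotParallel

lemma ker_recipHom_le_of_option {σ κ : Type*} [Fintype σ] [Fintype κ] [DecidableEq κ]
    (IH : ∀ g' : κ → σ → K, (∀ j, g' j ≠ 0) →
      RingHom.ker (recipHom g') ≤ iotaIdeal (relations K g'))
    {g : Option κ → σ → K} (hg : ∀ o, g o ≠ 0) :
    RingHom.ker (recipHom g) ≤ iotaIdeal (relations K g) := by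
  classical
  by_cases h : ∃ j, g (some j) ∈ K ∙ g none
  · obtain ⟨j, hj⟩ := h
    obtain ⟨c, hc⟩ := Submodule.mem_span_singleton.1 hj
    have hc0 : c ≠ 0 := by rintro rfl; exact hg (some j) (by rw [← hc, zero_smul])
    exact ker_recipHom_le_of_parallel (IH _ fun _ => hg _) hc0 hc
  · obtain ⟨P, hP⟩ := Submodule.exists_linearMap_ker_eq (K ∙ g none)
    exact ker_recipHom_le_of_not_parallel IH hg P hP fun j hj => h ⟨j, hP ▸ hj⟩

theorem ker_recipHom {σ ι : Type*} [Fintype σ] [Fintype ι] [DecidableEq ι] {g : ι → σ → K}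
    (hg : ∀ i, g i ≠ 0) : RingHom.ker (recipHom g) = iotaIdeal (relations K g) := by
  refine le_antisymm ?_ (iotaIdeal_le_ker_recipHom hg)
  refine Fintype.induction_empty_option (P := fun ι _ => ∀ [DecidableEq ι] (g : ι → σ → K),
    (∀ i, g i ≠ 0) → RingHom.ker (recipHom g) ≤ iotaIdeal (relations K g)) ?_ ?_ ?_ ι g hg
  · intro α β _ e IH _ g hg f hf
    classical
    let _ : Fintype α := Fintype.ofEquiv β e.symm
    have hf' : rename e.symm f ∈ RingHom.ker (recipHom (g ∘ e)) := by
      rwa [RingHom.mem_ker, recipHom_rename, Function.comp_assoc, e.self_comp_symm,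
        Function.comp_id]
    simpa [rename_rename] using rename_mem_iotaIdeal e.toEmbedding (IH (g ∘ e) (fun _ => hg _) hf')
  · intro _ g _ f hf
    obtain ⟨r, rfl⟩ := C_surjective PEmpty f
    have : r = 0 := by simpa [recipHom] using hf
    simp [this]
  · intro α _ IH _ g hg
    classical
    convert ker_recipHom_le_of_option (fun g' hg' => IH g' hg') hg

theorem exists_ker_eq_span_X_sup_iotaIdeal {ι : Type*} [Fintype ι] [DecidableEq ι]
    {W : Submodule K (ι → K)} {Γ : Finset ι} (hWΓ : ∀ a ∈ W, ∀ i ∈ Γ, a i = 0)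
    (hW : ∀ i ∉ Γ, Pi.single i 1 ∉ W) :
    ∃ Φ : MvPolynomial ι K →ₐ[K] MvRatFunc K ι,
      RingHom.ker Φ = Ideal.span (X '' Γ) ⊔ iotaIdeal W ∧ ∀ j ∉ Γ, Φ (X j) ≠ 0 := by
  obtain ⟨L, hL⟩ := Submodule.exists_linearMap_ker_eq W
  set g : ι → ι → K := fun i => L (Pi.single i 1)
  have hrel : relations K g = W := by
    rw [← hL, relations]
    congr 1
    ext i
    simp [g]
  set e : {i // i ∉ Γ} ↪ ι := Function.Embedding.subtype _
  have hg : ∀ j, (g ∘ e) j ≠ 0 := fun j h => hW j j.2 (by rw [← hL]; exact h)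
  have hvan : ∀ a ∈ relations K g, ∀ i ∉ Set.range e, a i = 0 := by
    rw [hrel]
    exact fun a ha i hi => hWΓ a ha i (by simpa [e] using hi)
  have hrange : (Set.range e)ᶜ = Γ := by
    ext i
    simp [e]
  refine ⟨(recipHom (g ∘ e)).comp (killCompl e.injective), ?_, fun j hj => ?_⟩
  · calc RingHom.ker ((recipHom (g ∘ e)).comp (killCompl e.injective))
        = (iotaIdeal (relations K (g ∘ e))).comap (killCompl e.injective) := by
          rw [← ker_recipHom hg]
          rfl
      _ = _ := by
          rw [Ideal.comap_eq_map_sup_ker (killCompl_rename_app (R := K) e.injective),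
            map_rename_iotaIdeal e hvan, hrel, ker_killCompl, hrange, sup_comm]
  · have : killCompl (R := K) e.injective (X j) = X ⟨j, hj⟩ := by
      rw [show (X j : MvPolynomial ι K) = rename e (X ⟨j, hj⟩) by simp [e], killCompl_rename_app]
    rw [AlgHom.comp_apply, this]
    simpa [recipHom] using recip_ne_zero (hg ⟨j, hj⟩)

end OrlikTerao

open OrlikTerao

section Covers

variable {R : Set (Fin n → K)} {V : Type*} [AddCommGroup V] [Module K V]
  {α : Fin n → Module.Dual K V}

lemma exists_ker_eq_Qid (hne : ∀ i, α i ≠ 0) (hR : ∀ r ∈ R, IsRel α r)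
    (Γ : Finset (Fin n)) :
    ∃ Φ : MvPolynomial (Fin n) K →ₐ[K] MvRatFunc K (Fin n),
      RingHom.ker Φ = Qid R Γ ∧ ∀ j ∉ Γ, Φ (X j) ≠ 0 := by
  have hrel : Submodule.span K (R0 R Γ) ≤ relations K α :=
    Submodule.span_le.2 fun r hr => mem_relations.2 (hR r hr.1)
  refine exists_ker_eq_span_X_sup_iotaIdeal (fun a ha i hi => ?_) fun i _ hi => ?_
  · refine (Submodule.span_le.2 (fun r hr => ?_) : _ ≤ LinearMap.ker (LinearMap.proj i)) ha
    by_contra hri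
    have : i ∈ Γ ∩ lsupp r := Finset.mem_inter.2 ⟨hi, mem_supp.2 hri⟩
    simp [hr.2] at this
  · have := hrel hi
    rw [relations, LinearMap.mem_ker, Fintype.linearCombination_apply_single, one_smul] at this
    exact hne i this

lemma Qid_isPrime (hne : ∀ i, α i ≠ 0) (hR : ∀ r ∈ R, IsRel α r)
    (Γ : Finset (Fin n)) : (Qid R Γ).IsPrime := by
  obtain ⟨Φ, hΦ, -⟩ := exists_ker_eq_Qid hne hR Γ
  exact hΦ ▸ RingHom.ker_isPrime Φ

lemma X_mem_Qid_iff (hne : ∀ i, α i ≠ 0) (hR : ∀ r ∈ R, IsRel α r)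
    {Γ : Finset (Fin n)} {j : Fin n} : X j ∈ Qid R Γ ↔ j ∈ Γ := by
  obtain ⟨Φ, hΦ, hX⟩ := exists_ker_eq_Qid hne hR Γ
  refine ⟨fun h => ?_, fun h => Ideal.mem_sup_left (Ideal.subset_span ⟨j, h, rfl⟩)⟩
  by_contra hj
  rw [← hΦ, RingHom.mem_ker] at h
  exact hX j hj h

lemma Jid_le_Qid {Γ : Finset (Fin n)} (hΓ : IsCover R Γ) : Jid R ≤ Qid R Γ := by
  refine Ideal.span_le.2 ?_
  rintro _ ⟨r, hr, rfl⟩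
  rcases (Γ ∩ lsupp r).eq_empty_or_nonempty with h | h
  · exact Ideal.mem_sup_right (iota_mem_iotaIdeal (Submodule.subset_span ⟨hr, h⟩))
  · have := hΓ r hr
    exact Ideal.mem_sup_left (iota_mem_span_X (show 1 < (Γ ∩ lsupp r).card by
      have := h.card_pos; omega))

open Classical in
def varsIn (q : Ideal (MvPolynomial (Fin n) K)) : Finset (Fin n) :=
  Finset.univ.filter fun i => X i ∈ q

lemma mem_varsIn {q : Ideal (MvPolynomial (Fin n) K)} {i : Fin n} : i ∈ varsIn q ↔ X i ∈ q := by
  simp [varsIn]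

variable {q : Ideal (MvPolynomial (Fin n) K)} [q.IsPrime]

lemma isCover_varsIn (hJ : Jid R ≤ q) : IsCover R (varsIn q) := by
  intro r hr hcard
  obtain ⟨i, hi⟩ := Finset.card_eq_one.1 hcard
  have hi' := Finset.mem_inter.1 (hi ▸ Finset.mem_singleton_self i)
  obtain ⟨j, hj, hXj⟩ :=
    exists_X_mem_of_iota_mem hi'.2 (mem_varsIn.1 hi'.1) (hJ (Ideal.subset_span ⟨r, hr, rfl⟩))
  have : j ∈ varsIn q ∩ lsupp r :=
    Finset.mem_inter.2 ⟨mem_varsIn.2 hXj, Finset.mem_of_mem_erase hj⟩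
  rw [hi, Finset.mem_singleton] at this
  exact Finset.ne_of_mem_erase hj this

lemma Qid_varsIn_le (hJ : Jid R ≤ q) : Qid R (varsIn q) ≤ q := by
  refine sup_le (Ideal.span_le.2 ?_) (Ideal.span_le.2 ?_)
  · rintro _ ⟨i, hi, rfl⟩
    exact mem_varsIn.1 hi
  · rintro _ ⟨a, ha, rfl⟩
    refine iota_mem_of_mem_span (D := (varsIn q)ᶜ) (fun j hj => by simpa [mem_varsIn] using hj)
      (fun b hb => ⟨fun i hi => Finset.mem_compl.2 fun h => ?_,
        hJ (Ideal.subset_span ⟨b, hb.1, rfl⟩)⟩) ha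
    have : i ∈ varsIn q ∩ lsupp b := Finset.mem_inter.2 ⟨h, hi⟩
    simp [hb.2] at this

end Covers

theorem Qid_minimal_prime_iff_general
    {V : Type*} [AddCommGroup V] [Module K V]
    (α : Fin n → Module.Dual K V) (hne : ∀ i, α i ≠ 0)
    (R : Set (Fin n → K)) (hR : ∀ r ∈ R, IsRel α r)
    (Γ : Finset (Fin n)) (hΓ : IsCover R Γ) :
    Qid R Γ ∈ (Jid R).minimalPrimes ↔
      ∀ Γ' : Finset (Fin n), IsCover R Γ' → Γ' ⊂ Γ → ¬ Qid R Γ' < Qid R Γ := by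
  constructor
  · intro hmin Γ' hΓ' _ hlt
    exact hlt.not_ge (hmin.2 ⟨Qid_isPrime hne hR Γ', Jid_le_Qid hΓ'⟩ hlt.le)
  · refine fun H => ⟨⟨Qid_isPrime hne hR Γ, Jid_le_Qid hΓ⟩, fun q ⟨hq, hJq⟩ hqΓ => ?_⟩
    have hQ : Qid R (varsIn q) ≤ q := Qid_varsIn_le hJq
    have hsub : varsIn q ⊆ Γ := fun i hi =>
      (X_mem_Qid_iff hne hR).1 (hqΓ (mem_varsIn.1 hi))
    rcases hsub.eq_or_ssubset with heq | hss
    · exact heq ▸ hQ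
    · rw [← eq_of_le_of_not_lt (hQ.trans hqΓ) (H _ (isCover_varsIn hJq) hss)]
      exact hQ

/-- Proposition 4.4 ((i) ⟺ (ii)): for `ℜ ⊆ F(𝒜)` and `Γ ∈ co(ℜ)`, the ideal `Q_Γ(ℜ)` is
a minimal prime of `J(ℜ)` if and only if `Q_{Γ'}(ℜ) ⊄ Q_Γ(ℜ)` for every `ℜ`-cover `Γ'`
with `Γ' ⊊ Γ`. -/
theorem Qid_minimal_prime_iff
    {V : Type*} [AddCommGroup V] [Module K V] [FiniteDimensional K V]
    (α : Fin n → Module.Dual K V) (hne : ∀ i, α i ≠ 0)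
    (hdist : ∀ i j, i ≠ j → LinearMap.ker (α i) ≠ LinearMap.ker (α j))
    (R : Set (Fin n → K)) (hR : ∀ r ∈ R, IsRel α r)
    (Γ : Finset (Fin n)) (hΓ : IsCover R Γ) :
    Qid R Γ ∈ (Jid R).minimalPrimes ↔
      ∀ Γ' : Finset (Fin n), IsCover R Γ' → Γ' ⊂ Γ → ¬ Qid R Γ' < Qid R Γ :=
  Qid_minimal_prime_iff_general α hne R hR Γ hΓ

end
end

section
/- Let ℜ be a finite subset of F(𝒜) such that |supp(r) ∩ supp(r')| ≤ 1 for all distinct r, r' ∈ ℜ. Then ℜ is simple if and only if the intersection graph 𝒢(ℜ) is quasi-acyclic (i.e., contains no proper cycle). -/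
/-!
If `ℜ` is simple and `v₀, …, v_{k-1}` is a proper cycle, the cycle vertex enumerated last meets
earlier elements in the two labels of its cycle edges, and these are distinct points, since the
labels are distinct sets of size at most one.

Conversely, if `𝒢(ℜ)` has no proper cycle, some `r ∈ ℜ` shares at most one coordinate with the
other elements: otherwise the endpoint of a path without repeated vertices or labels has a shared
coordinate `i` off its last edge, and `i` either already labels an edge of the path or leads back
to a path vertex (closing a proper cycle) or leads to a new vertex (extending the path), so paths
could grow beyond `|ℜ|`. Appending such an `r` to a simple enumeration of `ℜ ∖ {r}`, obtained by
induction, gives one of `ℜ`.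
-/

open MvPolynomial

noncomputable section

variable {K : Type*} [Field K] {n : ℕ}

/-- `ℜ` is simple: its elements admit an enumeration `r₁, …, r_m` such that
`|supp(rᵢ) ∩ (supp(r₁) ∪ ⋯ ∪ supp(r_{i-1}))| ≤ 1` for `i = 2, …, m`. -/
def SimpleRelSet (R : Finset (Fin n → K)) : Prop :=
  ∃ (m : ℕ) (e : Fin m → (Fin n → K)), Function.Injective e ∧
    Set.range e = (R : Set (Fin n → K)) ∧
    ∀ i : Fin m, (lsupp (e i) ∩ (Finset.Iio i).biUnion (fun j => lsupp (e j))).card ≤ 1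

/-- The intersection graph `𝒢(ℜ)` on vertex set `ℜ` (vertices `r ≠ r'` adjacent iff
`supp(r) ∩ supp(r') ≠ ∅`, the edge `{r,r'}` being labeled by `supp(r) ∩ supp(r')`)
contains a proper cycle: a cycle `v₀, v₁, …, v_{k-1}, v₀` (with `k ≥ 3` distinct vertices,
consecutive ones adjacent) whose edge labels are pairwise distinct. -/
def HasProperCycle (R : Finset (Fin n → K)) : Prop :=
  ∃ (k : ℕ) (v : Fin (k + 3) → (Fin n → K)),
    Function.Injective v ∧ (∀ i, v i ∈ R) ∧
    (∀ i, (lsupp (v i) ∩ lsupp (v (i + 1))).Nonempty) ∧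
    Function.Injective (fun i => lsupp (v i) ∩ lsupp (v (i + 1)))

open Finset Function

open Classical in
def sharedSupp (S : Finset (Fin n → K)) (r : Fin n → K) : Finset (Fin n) :=
  (lsupp r).filter fun i => ∃ s ∈ S, s ≠ r ∧ i ∈ lsupp s

@[simp]
lemma mem_sharedSupp {S : Finset (Fin n → K)} {r : Fin n → K} {i : Fin n} :
    i ∈ sharedSupp S r ↔ i ∈ lsupp r ∧ ∃ s ∈ S, s ≠ r ∧ i ∈ lsupp s := by
  simp [sharedSupp]

lemma Finset.eq_singleton_of_card_le_one {α : Type*} {s : Finset α} {a : α} (hs : s.card ≤ 1)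
    (ha : a ∈ s) : s = {a} :=
  eq_singleton_iff_unique_mem.2 ⟨ha, fun _ hb => card_le_one.1 hs _ hb _ ha⟩

lemma HasProperCycle.mono {S R : Finset (Fin n → K)} (hSR : S ⊆ R) (hS : HasProperCycle S) :
    HasProperCycle R :=
  let ⟨k, v, hv, hvS, hadj, hlab⟩ := hS
  ⟨k, v, hv, fun i => hSR (hvS i), hadj, hlab⟩

lemma SimpleRelSet.exists_card_sharedSupp_le_one {R S : Finset (Fin n → K)} (hR : SimpleRelSet R)
    (hSR : S ⊆ R) (hS : S.Nonempty) : ∃ r ∈ S, (sharedSupp S r).card ≤ 1 := by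
  classical
  obtain ⟨m, e, -, he, hsimple⟩ := hR
  have hSe : ∀ s ∈ S, s ∈ Set.range e := fun s hs => he ▸ mem_coe.2 (hSR hs)
  obtain ⟨r, hr⟩ := hS
  obtain ⟨j₀, rfl⟩ := hSe r hr
  obtain ⟨j, hj, hjmax⟩ := (univ.filter fun j => e j ∈ S).exists_max_image id ⟨j₀, by simpa⟩
  refine ⟨e j, (mem_filter.1 hj).2, (card_le_card fun i hi => ?_).trans (hsimple j)⟩
  obtain ⟨hij, s, hs, hsj, his⟩ := mem_sharedSupp.1 hi
  obtain ⟨j', rfl⟩ := hSe s hs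
  have hj'j : j' < j := (hjmax j' (by simpa using hs)).lt_of_ne (by rintro rfl; exact hsj rfl)
  exact mem_inter.2 ⟨hij, mem_biUnion.2 ⟨j', mem_Iio.2 hj'j, his⟩⟩

lemma two_le_card_sharedSupp_of_properCycle {S : Finset (Fin n → K)}
    (hS : (S : Set (Fin n → K)).Pairwise fun r r' => (lsupp r ∩ lsupp r').card ≤ 1)
    {k : ℕ} {v : Fin (k + 3) → Fin n → K} (hv : Injective v) (hvS : ∀ i, v i ∈ S)
    (hadj : ∀ i, (lsupp (v i) ∩ lsupp (v (i + 1))).Nonempty)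
    (hlab : Injective fun i => lsupp (v i) ∩ lsupp (v (i + 1))) (j : Fin (k + 3)) :
    2 ≤ (sharedSupp S (v j)).card := by
  have hsucc : ∀ i : Fin (k + 3), v i ≠ v (i + 1) := fun i h => by
    simpa using hv h
  have hlabel : ∀ i x, x ∈ lsupp (v i) ∩ lsupp (v (i + 1)) →
      lsupp (v i) ∩ lsupp (v (i + 1)) = {x} := fun i _ hx =>
    eq_singleton_of_card_le_one (hS (hvS i) (hvS (i + 1)) (hsucc i)) hx
  obtain ⟨x, hx⟩ := hadj (j - 1)
  obtain ⟨y, hy⟩ := hadj j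
  have hxy : x ≠ y := by
    rintro rfl
    have := hlab ((hlabel (j - 1) x hx).trans (hlabel j x hy).symm)
    simp at this
  rw [sub_add_cancel] at hx
  refine one_lt_card.2 ⟨x, ?_, y, ?_, hxy⟩ <;> rw [mem_sharedSupp]
  · exact ⟨(mem_inter.1 hx).2, v (j - 1), hvS _, (hsucc _).trans_eq (by rw [sub_add_cancel]),
      (mem_inter.1 hx).1⟩
  · exact ⟨(mem_inter.1 hy).1, v (j + 1), hvS _, (hsucc j).symm, (mem_inter.1 hy).2⟩

lemma not_hasProperCycle_of_simpleRelSet {R : Finset (Fin n → K)}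
    (hR : (R : Set (Fin n → K)).Pairwise fun r r' => (lsupp r ∩ lsupp r').card ≤ 1)
    (hsimple : SimpleRelSet R) : ¬ HasProperCycle R := by
  classical
  rintro ⟨k, v, hv, hvR, hadj, hlab⟩
  have hvS : ∀ i, v i ∈ univ.image v := fun i => mem_image_of_mem v (mem_univ i)
  obtain ⟨r, hr, hcard⟩ := hsimple.exists_card_sharedSupp_le_one (S := univ.image v)
    (image_subset_iff.2 fun i _ => hvR i) (univ_nonempty.image v)
  obtain ⟨j, -, rfl⟩ := mem_image.1 hr
  have hS : ((univ.image v : Finset _) : Set (Fin n → K)) ⊆ R := by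
    simpa using Set.range_subset_iff.2 hvR
  have := two_le_card_sharedSupp_of_properCycle (hR.mono hS) hv hvS hadj hlab j
  omega

def edgeLabel (p : ℕ → Fin n → K) (x : ℕ) : Finset (Fin n) :=
  lsupp (p x) ∩ lsupp (p (x + 1))

/-- `p 0, …, p t` is a path in `𝒢(ℜ)` without repeated vertices or edge labels (the values of `p`
beyond `t` play no role). -/
structure IsProperPath (R : Finset (Fin n → K)) (p : ℕ → Fin n → K) (t : ℕ) : Prop where
  mem : ∀ x ≤ t, p x ∈ R
  injOn : Set.InjOn p (Set.Iic t)
  edgeLabel_nonempty : ∀ x < t, (edgeLabel p x).Nonempty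
  edgeLabel_injOn : Set.InjOn (edgeLabel p) (Set.Iio t)

namespace IsProperPath

variable {R : Finset (Fin n → K)} {p : ℕ → Fin n → K} {t : ℕ}

lemma lt_card (hp : IsProperPath R p t) : t < R.card := by
  have := card_le_card_of_injOn p (s := range (t + 1))
    (fun x hx => hp.mem x (Nat.lt_succ_iff.1 (mem_range.1 hx)))
    (fun x hx y hy h => hp.injOn (Nat.lt_succ_iff.1 (mem_range.1 hx))
      (Nat.lt_succ_iff.1 (mem_range.1 hy)) h)
  simpa using this

lemma card_edgeLabel_le_one
    (hR : (R : Set (Fin n → K)).Pairwise fun r r' => (lsupp r ∩ lsupp r').card ≤ 1)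
    (hp : IsProperPath R p t) {x : ℕ} (hx : x < t) : (edgeLabel p x).card ≤ 1 :=
  hR (hp.mem x hx.le) (hp.mem (x + 1) hx) fun h =>
    x.succ_ne_self (hp.injOn (Set.mem_Iic.2 hx) (Set.mem_Iic.2 hx.le) h.symm)

lemma eq_of_mem_edgeLabel
    (hR : (R : Set (Fin n → K)).Pairwise fun r r' => (lsupp r ∩ lsupp r').card ≤ 1)
    (hp : IsProperPath R p t) {x y : ℕ} {i : Fin n} (hx : x < t) (hy : y < t)
    (hix : i ∈ edgeLabel p x) (hiy : i ∈ edgeLabel p y) : x = y :=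
  hp.edgeLabel_injOn hx hy <|
    (eq_singleton_of_card_le_one (hp.card_edgeLabel_le_one hR hx) hix).trans
      (eq_singleton_of_card_le_one (hp.card_edgeLabel_le_one hR hy) hiy).symm

lemma shift {a : ℕ} (hp : IsProperPath R p (a + t)) : IsProperPath R (fun x => p (a + x)) t where
  mem x hx := hp.mem (a + x) (by omega)
  injOn x hx y hy h := by
    have := hp.injOn (show a + x ≤ a + t by simp_all) (show a + y ≤ a + t by simp_all) h
    omega
  edgeLabel_nonempty x hx := hp.edgeLabel_nonempty (a + x) (by omega)
  edgeLabel_injOn x hx y hy h := by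
    have := hp.edgeLabel_injOn (show a + x < a + t by simp_all) (show a + y < a + t by simp_all) h
    omega

lemma hasProperCycle {k : ℕ} {i : Fin n} (hp : IsProperPath R p (k + 2)) (h0 : i ∈ lsupp (p 0))
    (hk : i ∈ lsupp (p (k + 2))) (hi : ∀ x < k + 2, i ∉ edgeLabel p x) : HasProperCycle R := by
  have hlabel : ∀ j : Fin (k + 3), lsupp (p j) ∩ lsupp (p ↑(j + 1)) =
      if j = Fin.last _ then lsupp (p (k + 2)) ∩ lsupp (p 0) else edgeLabel p j := by
    intro j
    rw [Fin.val_add_one]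
    split_ifs with h
    · subst h; rfl
    · rfl
  have hclose : i ∈ lsupp (p (k + 2)) ∩ lsupp (p 0) := mem_inter.2 ⟨hk, h0⟩
  refine ⟨k, fun j => p j, fun j j' h => Fin.ext ?_, fun j => hp.mem j (by omega),
    fun j => ?_, fun j j' h => ?_⟩
  · exact hp.injOn (Set.mem_Iic.2 (by omega)) (Set.mem_Iic.2 (by omega)) h
  · simp only [hlabel]
    split_ifs with hj
    · exact ⟨i, hclose⟩
    · exact hp.edgeLabel_nonempty j (Fin.val_lt_last hj)
  · simp only [hlabel] at h
    split_ifs at h with hj hj' hj'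
    · exact hj.trans hj'.symm
    · exact absurd (h ▸ hclose) (hi j' (Fin.val_lt_last hj'))
    · exact absurd (h ▸ hclose) (hi j (Fin.val_lt_last hj))
    · exact Fin.ext (hp.edgeLabel_injOn (Fin.val_lt_last hj) (Fin.val_lt_last hj') h)

lemma hasProperCycle_of_segment {a : ℕ} {i : Fin n} (hp : IsProperPath R p t) (hat : a + 2 ≤ t)
    (ha : i ∈ lsupp (p a)) (ht : i ∈ lsupp (p t)) (hi : ∀ x, a ≤ x → x < t → i ∉ edgeLabel p x) :
    HasProperCycle R := by
  obtain ⟨k, rfl⟩ : ∃ k, t = a + (k + 2) := ⟨t - a - 2, by omega⟩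
  exact hp.shift.hasProperCycle ha ht fun x hx => hi (a + x) (by omega) (by omega)

lemma snoc {r : Fin n → K} {i : Fin n} (hp : IsProperPath R p t) (hr : r ∈ R)
    (hrp : ∀ x ≤ t, p x ≠ r) (hi : i ∈ lsupp (p t) ∩ lsupp r)
    (hnew : ∀ x < t, i ∉ edgeLabel p x) : IsProperPath R (update p (t + 1) r) (t + 1) := by
  set q := update p (t + 1) r
  have hq : ∀ x ≤ t, q x = p x := fun x hx => update_of_ne (by omega) _ _
  have hqt : q (t + 1) = r := update_self _ _ _
  have hlabel : ∀ x < t, edgeLabel q x = edgeLabel p x := fun x hx => by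
    simp only [edgeLabel, hq x hx.le, hq (x + 1) hx]
  have hlabel_t : edgeLabel q t = lsupp (p t) ∩ lsupp r := by
    simp only [edgeLabel, hq t le_rfl, hqt]
  refine ⟨fun x hx => ?_, fun x hx y hy h => ?_, fun x hx => ?_, fun x hx y hy h => ?_⟩
  · obtain hx | rfl : x ≤ t ∨ x = t + 1 := by omega
    · exact hq x hx ▸ hp.mem x hx
    · exact hqt ▸ hr
  · simp only [Set.mem_Iic] at hx hy
    rcases (by omega : x ≤ t ∨ x = t + 1) with hx | rfl <;>
    rcases (by omega : y ≤ t ∨ y = t + 1) with hy | rfl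
    · exact hp.injOn hx hy (by rwa [hq x hx, hq y hy] at h)
    · exact (hrp x hx (by rwa [hq x hx, hqt] at h)).elim
    · exact (hrp y hy (by rwa [hq y hy, hqt, eq_comm] at h)).elim
    · rfl
  · rcases (by omega : x < t ∨ x = t) with hx | hx
    · exact hlabel x hx ▸ hp.edgeLabel_nonempty x hx
    · subst x
      exact hlabel_t ▸ ⟨i, hi⟩
  · simp only [Set.mem_Iio] at hx hy
    rcases (by omega : x < t ∨ x = t) with hx | hx <;>
    rcases (by omega : y < t ∨ y = t) with hy | hy
    · exact hp.edgeLabel_injOn hx hy (by rwa [hlabel x hx, hlabel y hy] at h)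
    · subst y
      exact (hnew x hx (by rwa [← hlabel_t, ← h, hlabel x hx] at hi)).elim
    · subst x
      exact (hnew y hy (by rwa [← hlabel_t, h, hlabel y hy] at hi)).elim
    · rw [hx, hy]

lemma exists_extend
    (hR : (R : Set (Fin n → K)).Pairwise fun r r' => (lsupp r ∩ lsupp r').card ≤ 1)
    (hR_acyclic : ¬ HasProperCycle R) (hshared : ∀ r ∈ R, 1 < (sharedSupp R r).card)
    (hp : IsProperPath R p t) : ∃ q, IsProperPath R q (t + 1) := by
  obtain ⟨i, hi, hi_prev⟩ : ∃ i ∈ sharedSupp R (p t), t ≠ 0 → i ∉ lsupp (p (t - 1)) := by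
    rcases Nat.eq_zero_or_pos t with rfl | ht
    · obtain ⟨i, hi⟩ := card_pos.1 (one_pos.trans (hshared _ (hp.mem 0 le_rfl)))
      exact ⟨i, hi, absurd rfl⟩
    · have hcard := hp.card_edgeLabel_le_one hR (Nat.sub_lt ht one_pos)
      rw [edgeLabel, show t - 1 + 1 = t by omega] at hcard
      obtain ⟨i, hi, hi'⟩ :=
        exists_mem_notMem_of_card_lt_card (hcard.trans_lt (hshared _ (hp.mem t le_rfl)))
      exact ⟨i, hi, fun _ hi'' => hi' (mem_inter.2 ⟨hi'', (mem_sharedSupp.1 hi).1⟩)⟩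
  obtain ⟨hit, r, hr, hrt, hir⟩ := mem_sharedSupp.1 hi
  by_cases hlabel : ∃ j < t, i ∈ edgeLabel p j
  · obtain ⟨j, hjt, hij⟩ := hlabel
    have hj : j + 1 + 2 ≤ t := by
      have : j + 1 ≠ t := fun h => hi_prev (by omega) (by simpa [← h] using (mem_inter.1 hij).1)
      have : j + 1 ≠ t - 1 := fun h => hi_prev (by omega) (h ▸ (mem_inter.1 hij).2)
      omega
    refine absurd (hp.hasProperCycle_of_segment hj (mem_inter.1 hij).2 hit ?_) hR_acyclic
    intro x hx hxt hix
    have := hp.eq_of_mem_edgeLabel hR hxt hjt hix hij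
    omega
  push Not at hlabel
  by_cases hr_on : ∃ s ≤ t, p s = r
  · obtain ⟨s, hst, rfl⟩ := hr_on
    have hs : s + 2 ≤ t := by
      have : s ≠ t := by rintro rfl; exact hrt rfl
      have : s ≠ t - 1 := by rintro rfl; exact hi_prev (by omega) hir
      omega
    exact absurd (hp.hasProperCycle_of_segment hs hir hit fun x _ hxt => hlabel x hxt) hR_acyclic
  push Not at hr_on
  exact ⟨_, hp.snoc hr hr_on (mem_inter.2 ⟨hit, hir⟩) hlabel⟩

end IsProperPath

lemma exists_card_sharedSupp_le_one_of_not_hasProperCycle {R : Finset (Fin n → K)}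
    (hR : (R : Set (Fin n → K)).Pairwise fun r r' => (lsupp r ∩ lsupp r').card ≤ 1)
    (hR_acyclic : ¬ HasProperCycle R) (hne : R.Nonempty) :
    ∃ r ∈ R, (sharedSupp R r).card ≤ 1 := by
  by_contra! hshared
  obtain ⟨r, hr⟩ := hne
  have hpath : ∀ t, ∃ p, IsProperPath R p t := by
    intro t
    induction t with
    | zero =>
      refine ⟨fun _ => r, fun _ _ => hr, fun x hx y hy _ => ?_, fun x hx => ?_, fun x hx => ?_⟩
      · simp_all
      · exact absurd hx x.not_lt_zero
      · exact absurd hx x.not_lt_zero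
    | succ t ih =>
      obtain ⟨p, hp⟩ := ih
      exact hp.exists_extend hR hR_acyclic hshared
  obtain ⟨p, hp⟩ := hpath R.card
  exact hp.lt_card.false

lemma SimpleRelSet.of_erase [DecidableEq (Fin n → K)] {R : Finset (Fin n → K)} {r : Fin n → K}
    (hr : r ∈ R) (hcard : (sharedSupp R r).card ≤ 1) (hsimple : SimpleRelSet (R.erase r)) :
    SimpleRelSet R := by
  obtain ⟨m, e, he, hrange, hsimple⟩ := hsimple
  have hre : r ∉ Set.range e := by simp [hrange]
  refine ⟨m + 1, Fin.snoc e r, Fin.snoc_injective_of_injective he hre, ?_, fun i => ?_⟩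
  · rw [Fin.range_snoc, hrange, coe_erase, Set.insert_sdiff_singleton,
      Set.insert_eq_of_mem (mem_coe.2 hr)]
  induction i using Fin.lastCases with
  | cast j =>
    rw [← Fin.finsetImage_castSucc_Iio, image_biUnion]
    simpa only [Fin.snoc_castSucc] using hsimple j
  | last =>
    rw [Fin.Iio_last_eq_map, map_eq_image, image_biUnion]
    refine (card_le_card fun i hi => ?_).trans hcard
    simp only [Fin.snoc_last, mem_inter, mem_biUnion, Fin.coe_castSuccEmb, Fin.snoc_castSucc] at hi
    obtain ⟨hir, j, -, hij⟩ := hi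
    have hej : e j ∈ R.erase r := mem_coe.1 (hrange ▸ Set.mem_range_self j)
    exact mem_sharedSupp.2 ⟨hir, e j, mem_of_mem_erase hej, ne_of_mem_erase hej, hij⟩

lemma simpleRelSet_of_not_hasProperCycle {R : Finset (Fin n → K)}
    (hR : (R : Set (Fin n → K)).Pairwise fun r r' => (lsupp r ∩ lsupp r').card ≤ 1)
    (hR_acyclic : ¬ HasProperCycle R) : SimpleRelSet R := by
  classical
  induction R using Finset.strongInduction with
  | H R ih =>
  rcases R.eq_empty_or_nonempty with rfl | hne
  · exact ⟨0, Fin.elim0, fun i => i.elim0, by simp, fun i => i.elim0⟩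
  obtain ⟨r, hr, hcard⟩ := exists_card_sharedSupp_le_one_of_not_hasProperCycle hR hR_acyclic hne
  exact .of_erase hr hcard (ih _ (erase_ssubset hr) (hR.mono (coe_subset.2 (erase_subset r R)))
    fun h => hR_acyclic (h.mono (erase_subset r R)))

theorem simple_iff_quasi_acyclic_general
    (R : Finset (Fin n → K))
    (hpair : ∀ r ∈ R, ∀ r' ∈ R, r ≠ r' → (lsupp r ∩ lsupp r').card ≤ 1) :
    SimpleRelSet R ↔ ¬ HasProperCycle R :=
  ⟨not_hasProperCycle_of_simpleRelSet hpair, simpleRelSet_of_not_hasProperCycle hpair⟩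

/-- Lemma 4.6: let `ℜ` be a finite subset of `F(𝒜)` with `|supp(r) ∩ supp(r')| ≤ 1` for
all distinct `r, r' ∈ ℜ`.  Then `ℜ` is simple if and only if the intersection graph
`𝒢(ℜ)` is quasi-acyclic (contains no proper cycle). -/
theorem simple_iff_quasi_acyclic
    {V : Type*} [AddCommGroup V] [Module K V] [FiniteDimensional K V]
    (α : Fin n → Module.Dual K V) (hne : ∀ i, α i ≠ 0)
    (hdist : ∀ i j, i ≠ j → LinearMap.ker (α i) ≠ LinearMap.ker (α j))
    (R : Finset (Fin n → K)) (hR : ∀ r ∈ R, IsRel α r)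
    (hpair : ∀ r ∈ R, ∀ r' ∈ R, r ≠ r' → (lsupp r ∩ lsupp r').card ≤ 1) :
    SimpleRelSet R ↔ ¬ HasProperCycle R :=
  simple_iff_quasi_acyclic_general R hpair

end
end
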